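/- Let W_1, W_2, W_3, W_4 be finite-dimensional subspaces of a vector space and let S_{i→j} ≤ W_i for 1 ≤ i < j ≤ 4. Define W_5 to be any subspace containing W_j ∩ (W_{j+1}+...+W_4) for j = 1, 2, 3. Then h(S_{i→j} | W_5) ≤ h(S_{i→j} | W_{i+1}+...+W_4) for all 1 ≤ i < j ≤ 4, where h(A|B) = dim(A+B) − dim(B); moreover if W_5 is exactly the span of the three intersections, dim(W_5) ≤ Σ_{j=1}^{4} dim(W_j) − dim(W_1+W_2+W_3+W_4). -/

import Mathlib

open Module Finset

/-- The paper's `h(A|B)`. -/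
noncomputable def condDim {F V : Type*} [Field F] [AddCommGroup V] [Module F V]
    (A B : Submodule F V) : ℤ :=
  (finrank F ↥(A ⊔ B) : ℤ) - (finrank F ↥B : ℤ)

section

variable {F V : Type*} [Field F] [AddCommGroup V] [Module F V]

theorem condDim_eq_finrank_sub_finrank_inf (A B : Submodule F V) [FiniteDimensional F A]
    [FiniteDimensional F B] :
    condDim A B = (finrank F A : ℤ) - finrank F ↥(A ⊓ B) := by
  have := Submodule.finrank_sup_add_finrank_inf_eq A B
  unfold condDim
  omega

theorem condDim_le_condDim_of_inf_le {A B C : Submodule F V} [FiniteDimensional F A]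
    [FiniteDimensional F B] [FiniteDimensional F C] (h : A ⊓ B ≤ C) :
    condDim A C ≤ condDim A B := by
  rw [condDim_eq_finrank_sub_finrank_inf, condDim_eq_finrank_sub_finrank_inf]
  have := Submodule.finrank_mono (le_inf inf_le_left h : A ⊓ B ≤ A ⊓ C)
  omega

/-- Each step `j` adds `W j` to the tail `W (j+1) + ⋯ + W n`, losing exactly
`dim (W j ∩ tail)` by the modular law; the span of these intersections has at most that total
dimension. -/
theorem finrank_sup_inf_tail_add_finrank_sup_le (W : ℕ → Submodule F V)
    [∀ i, FiniteDimensional F (W i)] (a n : ℕ) :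
    (finrank F ↥((Icc a n).sup fun j => W j ⊓ (Icc (j + 1) n).sup W) : ℤ)
      + finrank F ↥((Icc a n).sup W) ≤ ∑ j ∈ Icc a n, (finrank F (W j) : ℤ) := by
  induction hd : n + 1 - a generalizing a with
  | zero =>
    have empty : Icc a n = ∅ := Icc_eq_empty_of_lt (by omega)
    rw [empty, sup_empty, sup_empty]
    simp
  | succ d ih =>
    have tail := ih (a + 1) (by omega)
    rw [← insert_Icc_add_one_left_eq_Icc (by omega : a ≤ n), sup_insert, sup_insert,
      sum_insert (by simp)]
    set T := (Icc (a + 1) n).sup W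
    set X := (Icc (a + 1) n).sup fun j => W j ⊓ (Icc (j + 1) n).sup W
    have : FiniteDimensional F T := Submodule.finiteDimensional_finset_sup _ _
    have : FiniteDimensional F X := Submodule.finiteDimensional_finset_sup _ _
    have modular := Submodule.finrank_sup_add_finrank_inf_eq (W a) T
    have subadd := Submodule.finrank_add_le_finrank_add_finrank (W a ⊓ T) X
    omega

end

theorem stmt15_general {F V : Type*} [Field F] [AddCommGroup V] [Module F V]
    (W : ℕ → Submodule F V) (S : ℕ → ℕ → Submodule F V)
    (hfdW : ∀ i, FiniteDimensional F ↥(W i))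
    (hSW : ∀ i j, 1 ≤ i → i < j → j ≤ 4 → S i j ≤ W i)
    (W5 : Submodule F V) [FiniteDimensional F ↥W5]
    (hW5 : ∀ j, 1 ≤ j → j ≤ 3 → W j ⊓ (Finset.Icc (j+1) 4).sup W ≤ W5) :
    (∀ i j, 1 ≤ i → i < j → j ≤ 4 →
      condDim (S i j) W5 ≤ condDim (S i j) ((Finset.Icc (i+1) 4).sup W))
    ∧ (W5 = (Finset.Icc 1 3).sup (fun j => W j ⊓ (Finset.Icc (j+1) 4).sup W) →
        (finrank F ↥W5 : ℤ)
          ≤ (∑ j ∈ Finset.Icc 1 4, (finrank F ↥(W j) : ℤ))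
            - (finrank F ↥(W 1 ⊔ W 2 ⊔ W 3 ⊔ W 4) : ℤ)) := by
  constructor
  · intro i j hi hij hj
    have := Submodule.finiteDimensional_of_le (hSW i j hi hij hj)
    have : FiniteDimensional F ↥((Icc (i + 1) 4).sup W) :=
      Submodule.finiteDimensional_finset_sup _ _
    exact condDim_le_condDim_of_inf_le
      ((inf_le_inf_right _ (hSW i j hi hij hj)).trans (hW5 i hi (by omega)))
  · rintro rfl
    have bound := finrank_sup_inf_tail_add_finrank_sup_le W 1 4
    have last_bot : W 4 ⊓ (Icc 5 4).sup W = ⊥ := by simp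
    have drop_last : Icc 1 4 = insert 4 (Icc 1 3) := by decide
    rw [drop_last, sup_insert, last_bot, bot_sup_eq, ← drop_last] at bound
    have whole : (Icc 1 4).sup W = W 1 ⊔ W 2 ⊔ W 3 ⊔ W 4 := by
      rw [drop_last, show Icc 1 3 = {1, 2, 3} by decide, sup_insert, sup_insert, sup_insert,
        sup_singleton]
      ac_rfl
    rw [whole] at bound
    omega

/-- the virtual node `W_5` for the `(4,3,3)` bound:
any `W_5` containing `W_j ∩ W_[j+1,4]` for `j = 1,2,3` satisfies
`h(S_{i→j} | W_5) ≤ h(S_{i→j} | W_[i+1,4])`, and if `W_5` is exactly the span of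
the three intersections then `dim W_5 ≤ Σ_j dim W_j − dim(W_1+W_2+W_3+W_4)`. -/
theorem stmt15 {F V : Type*} [Field F] [AddCommGroup V] [Module F V]
    (W : ℕ → Submodule F V) (S : ℕ → ℕ → Submodule F V)
    (hfdW : ∀ i, FiniteDimensional F ↥(W i)) (hfdS : ∀ i j, FiniteDimensional F ↥(S i j))
    (hSW : ∀ i j, 1 ≤ i → i < j → j ≤ 4 → S i j ≤ W i)
    (W5 : Submodule F V) [FiniteDimensional F ↥W5]
    (hW5 : ∀ j, 1 ≤ j → j ≤ 3 → W j ⊓ (Finset.Icc (j+1) 4).sup W ≤ W5) :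
    (∀ i j, 1 ≤ i → i < j → j ≤ 4 →
      condDim (S i j) W5 ≤ condDim (S i j) ((Finset.Icc (i+1) 4).sup W))
    ∧ (W5 = (Finset.Icc 1 3).sup (fun j => W j ⊓ (Finset.Icc (j+1) 4).sup W) →
        (finrank F ↥W5 : ℤ)
          ≤ (∑ j ∈ Finset.Icc 1 4, (finrank F ↥(W j) : ℤ))
            - (finrank F ↥(W 1 ⊔ W 2 ⊔ W 3 ⊔ W 4) : ℤ)) :=
  stmt15_general W S hfdW hSW W5 hW5
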